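/- arXiv:cond-mat/9708132 — 6 statements merged into one kernel-verified Lean document; each statement's English description precedes it below -/
import Mathlib

section
/- Let H and O be self-adjoint operators on a finite-dimensional Hilbert space, and Φ a unit eigenvector of H with eigenvalue E such that ‖OΦ‖² ≥ m² > 0. If ‖[[O,H],O]‖ ≤ K, then |(Ψ, HΨ) - E| ≤ K/(2m²), where Ψ = OΦ/‖OΦ‖. -/
noncomputable section

local notation "⟪" x ", " y "⟫" => @inner ℂ _ _ x y

/-- For self-adjoint `H`, `O`, a unit eigenvector `Φ` of `H` with eigenvalue `E`
such that `‖O Φ‖² ≥ m² > 0`, and `‖[[O,H],O]‖ ≤ K`, the state `Ψ = O Φ/‖O Φ‖` satisfies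
`|(Ψ, H Ψ) - E| ≤ K/(2 m²)`. -/
theorem stmt1 (n : ℕ)
    (H O : EuclideanSpace ℂ (Fin n) →L[ℂ] EuclideanSpace ℂ (Fin n))
    (hH : IsSelfAdjoint H) (hO : IsSelfAdjoint O)
    (Φ : EuclideanSpace ℂ (Fin n)) (hΦ : ‖Φ‖ = 1) (E : ℝ)
    (hE : H Φ = (E : ℂ) • Φ)
    (m : ℝ) (hm : 0 < m) (hLRO : m ^ 2 ≤ ‖O Φ‖ ^ 2)
    (K : ℝ) (hK : ‖(O * H - H * O) * O - O * (O * H - H * O)‖ ≤ K)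
    (Ψ : EuclideanSpace ℂ (Fin n)) (hΨ : Ψ = (‖O Φ‖ : ℂ)⁻¹ • O Φ) :
    ‖⟪Ψ, H Ψ⟫ - (E : ℂ)‖ ≤ K / (2 * m ^ 2) := by
  have hHs : ∀ x y, ⟪H x, y⟫ = ⟪x, H y⟫ := fun x y =>
    (ContinuousLinearMap.isSelfAdjoint_iff_isSymmetric.mp hH) x y
  have hOs : ∀ x y, ⟪O x, y⟫ = ⟪x, O y⟫ := fun x y =>
    (ContinuousLinearMap.isSelfAdjoint_iff_isSymmetric.mp hO) x y
  set a := ‖O Φ‖ with ha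
  have ha2 : (0:ℝ) < a ^ 2 := lt_of_lt_of_le (pow_pos hm 2) hLRO
  have ha0 : 0 < a := by nlinarith [norm_nonneg (O Φ)]
  set C := (O * H - H * O) * O - O * (O * H - H * O) with hC
  have hCΦ : C Φ = O (H (O Φ)) - H (O (O Φ)) - (O (O (H Φ)) - O (H (O Φ))) := by
    simp [hC, ContinuousLinearMap.sub_apply, ContinuousLinearMap.mul_apply, map_sub]
  have key : ⟪Φ, C Φ⟫ = 2 * ⟪O Φ, H (O Φ)⟫ - 2 * (E : ℂ) * ((a : ℂ))^2 := by
    rw [hCΦ]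
    have h1 : ⟪Φ, O (H (O Φ))⟫ = ⟪O Φ, H (O Φ)⟫ := (hOs Φ _).symm
    have h2 : ⟪Φ, H (O (O Φ))⟫ = (E : ℂ) * ⟪O Φ, O Φ⟫ := by
      rw [← hHs, hE, inner_smul_left, hOs, Complex.conj_ofReal]
    have h3 : ⟪Φ, O (O (H Φ))⟫ = (E : ℂ) * ⟪O Φ, O Φ⟫ := by
      rw [hE, map_smul, map_smul, inner_smul_right, hOs]
    have h4 : ⟪O Φ, O Φ⟫ = ((a : ℂ))^2 := by
      rw [inner_self_eq_norm_sq_to_K]; norm_cast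
    rw [inner_sub_right, inner_sub_right, inner_sub_right, h1, h2, h3, h4]
    ring
  have hΨH : ⟪Ψ, H Ψ⟫ - (E : ℂ) = (2 * ((a : ℂ))^2)⁻¹ * ⟪Φ, C Φ⟫ := by
    have haC : ((a:ℂ)) ≠ 0 := by exact_mod_cast ha0.ne'
    rw [hΨ, map_smul, inner_smul_left, inner_smul_right, key, map_inv₀,
      Complex.conj_ofReal]
    field_simp
  rw [hΨH]
  have hbound : ‖⟪Φ, C Φ⟫‖ ≤ K := by
    calc ‖⟪Φ, C Φ⟫‖ ≤ ‖Φ‖ * ‖C Φ‖ := norm_inner_le_norm _ _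
    _ ≤ ‖Φ‖ * (‖C‖ * ‖Φ‖) := by gcongr; exact C.le_opNorm Φ
    _ = ‖C‖ := by rw [hΦ]; ring
    _ ≤ K := hK
  have hKnn : 0 ≤ K := le_trans (norm_nonneg _) hK
  rw [norm_mul, norm_inv]
  have h2a : ‖(2 * ((a : ℂ))^2)‖ = 2 * a ^ 2 := by
    rw [norm_mul, norm_pow, Complex.norm_real, Real.norm_eq_abs, abs_of_pos ha0]
    simp
  rw [h2a, inv_mul_eq_div]
  exact div_le_div₀ hKnn hbound (by positivity) (by nlinarith)
end
end

section
/- (Horsch–von der Linden) Let H and O be self-adjoint operators on a finite-dimensional Hilbert space with ‖[[O,H],O]‖ ≤ K. Let Φ⁰ be a unit ground state of H with energy E⁰ satisfying (Φ⁰, OΦ⁰) = 0 and (Φ⁰, O²Φ⁰) ≥ m² > 0. Then H has an eigenvalue E¹ with a corresponding eigenvector orthogonal to Φ⁰ such that E¹ - E⁰ ≤ K/(2m²). -/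
noncomputable section

local notation "⟪" x ", " y "⟫" => @inner ℂ _ _ x y

set_option maxHeartbeats 1000000 in
/-- Horsch–von der Linden: If the unit ground state `Φ⁰` of `H` (with minimal
eigenvalue `E⁰`) satisfies `⟨Φ⁰, O Φ⁰⟩ = 0` and `⟨Φ⁰, O² Φ⁰⟩ ≥ m² > 0`, and
`‖[[O,H],O]‖ ≤ K`, then `H` has an eigenvalue `E¹` with eigenvector orthogonal to `Φ⁰`
such that `E¹ - E⁰ ≤ K/(2 m²)`. -/
theorem stmt2 (n : ℕ)
    (H O : EuclideanSpace ℂ (Fin n) →L[ℂ] EuclideanSpace ℂ (Fin n))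
    (hH : IsSelfAdjoint H) (hO : IsSelfAdjoint O)
    (Φ₀ : EuclideanSpace ℂ (Fin n)) (hΦ₀ : ‖Φ₀‖ = 1) (E₀ : ℝ)
    (hE₀ : H Φ₀ = (E₀ : ℂ) • Φ₀)
    (hmin : ∀ (μ : ℝ) (v : EuclideanSpace ℂ (Fin n)),
      v ≠ 0 → H v = (μ : ℂ) • v → E₀ ≤ μ)
    (hO1 : ⟪Φ₀, O Φ₀⟫ = 0)
    (m : ℝ) (hm : 0 < m) (hLRO : m ^ 2 ≤ (⟪Φ₀, O (O Φ₀)⟫).re)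
    (K : ℝ) (hK : ‖(O * H - H * O) * O - O * (O * H - H * O)‖ ≤ K) :
    ∃ (E₁ : ℝ) (v : EuclideanSpace ℂ (Fin n)),
      v ≠ 0 ∧ H v = (E₁ : ℂ) • v ∧ ⟪Φ₀, v⟫ = 0 ∧ E₁ - E₀ ≤ K / (2 * m ^ 2) := by
  classical
  set ψ := O Φ₀ with hψdef
  have hn : Module.finrank ℂ (EuclideanSpace ℂ (Fin n)) = n := finrank_euclideanSpace_fin
  have hHs : (↑H : EuclideanSpace ℂ (Fin n) →ₗ[ℂ] EuclideanSpace ℂ (Fin n)).IsSymmetric :=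
    ContinuousLinearMap.isSelfAdjoint_iff_isSymmetric.mp hH
  have hOs : (↑O : EuclideanSpace ℂ (Fin n) →ₗ[ℂ] EuclideanSpace ℂ (Fin n)).IsSymmetric :=
    ContinuousLinearMap.isSelfAdjoint_iff_isSymmetric.mp hO
  set e := hHs.eigenvectorBasis hn with he
  set μ := hHs.eigenvalues hn with hμ
  have He : ∀ i, H (e i) = ((μ i : ℝ) : ℂ) • e i := fun i => hHs.apply_eigenvectorBasis hn i
  have hEmin : ∀ i, E₀ ≤ μ i := fun i =>
    hmin _ _ (e.orthonormal.ne_zero i) (He i)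
  -- coefficients
  set a : Fin n → ℂ := fun j => ⟪e j, ψ⟫ with ha
  -- symmetry facts
  have hsymH : ∀ x y : EuclideanSpace ℂ (Fin n), ⟪H x, y⟫ = ⟪x, H y⟫ := fun x y => hHs x y
  have hsymO : ∀ x y : EuclideanSpace ℂ (Fin n), ⟪O x, y⟫ = ⟪x, O y⟫ := fun x y => hOs x y
  -- the commutator bound
  have hC : ⟪Φ₀, ((O * H - H * O) * O - O * (O * H - H * O)) Φ₀⟫
      = ((2 : ℝ) : ℂ) * (⟪ψ, H ψ⟫ - (E₀ : ℂ) * ⟪ψ, ψ⟫) := by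
    have h1 : ⟪Φ₀, O (H ψ)⟫ = ⟪ψ, H ψ⟫ := by rw [← hsymO]
    have h2 : ⟪Φ₀, H (O ψ)⟫ = (E₀ : ℂ) * ⟪ψ, ψ⟫ := by
      rw [← hsymH, hE₀, inner_smul_left, Complex.conj_ofReal, ← hsymO]
    have h3 : ⟪Φ₀, O (O (H Φ₀))⟫ = (E₀ : ℂ) * ⟪ψ, ψ⟫ := by
      rw [hE₀, map_smul, map_smul, inner_smul_right, ← hsymO]
    simp only [ContinuousLinearMap.sub_apply, ContinuousLinearMap.mul_apply, map_sub,
      inner_sub_right]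
    rw [h1, h2, h3]
    push_cast
    ring
  have hCbound : ‖⟪Φ₀, ((O * H - H * O) * O - O * (O * H - H * O)) Φ₀⟫‖ ≤ K := by
    have h1 : ‖⟪Φ₀, ((O * H - H * O) * O - O * (O * H - H * O)) Φ₀⟫‖
        ≤ ‖Φ₀‖ * ‖((O * H - H * O) * O - O * (O * H - H * O)) Φ₀‖ := norm_inner_le_norm _ _
    have h2 : ‖((O * H - H * O) * O - O * (O * H - H * O)) Φ₀‖
        ≤ ‖(O * H - H * O) * O - O * (O * H - H * O)‖ * ‖Φ₀‖ :=
      ContinuousLinearMap.le_opNorm _ _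
    rw [hΦ₀, one_mul] at h1
    rw [hΦ₀, mul_one] at h2
    linarith
  -- real quantities
  set N : ℝ := (⟪ψ, ψ⟫).re with hN
  set G : ℝ := (⟪ψ, H ψ⟫).re - E₀ * N with hG
  have hGK : G ≤ K / 2 := by
    have h2 : (((2 : ℝ) : ℂ) * (⟪ψ, H ψ⟫ - (E₀ : ℂ) * ⟪ψ, ψ⟫)).re ≤ K := by
      rw [← hC]
      calc (⟪Φ₀, ((O * H - H * O) * O - O * (O * H - H * O)) Φ₀⟫).re
          ≤ ‖⟪Φ₀, ((O * H - H * O) * O - O * (O * H - H * O)) Φ₀⟫‖ := Complex.re_le_norm _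
        _ ≤ K := hCbound
    rw [Complex.re_ofReal_mul, Complex.sub_re, Complex.mul_re, Complex.ofReal_re,
      Complex.ofReal_im] at h2
    rw [hG, hN]
    nlinarith [h2]
  have hNm : m ^ 2 ≤ N := by
    have h1 : ⟪ψ, ψ⟫ = ⟪Φ₀, O ψ⟫ := hsymO Φ₀ ψ
    rw [hN, h1]; exact hLRO
  -- expansions in the eigenbasis
  have hψsum : ∀ y : EuclideanSpace ℂ (Fin n), ⟪y, ψ⟫ = ∑ j, ⟪y, e j⟫ * a j := by
    intro y
    rw [← e.sum_inner_mul_inner y ψ]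
  have hψψ : ⟪ψ, ψ⟫ = ∑ j, (starRingEnd ℂ) (a j) * a j := by
    rw [hψsum ψ]
    congr 1; ext j
    rw [ha, ← inner_conj_symm ψ (e j)]
  have hψHψ : ⟪ψ, H ψ⟫ = ∑ j, ((μ j : ℝ) : ℂ) * ((starRingEnd ℂ) (a j) * a j) := by
    rw [← e.sum_inner_mul_inner ψ (H ψ)]
    congr 1; ext j
    have : ⟪e j, H ψ⟫ = ((μ j : ℝ) : ℂ) * a j := by
      rw [← hsymH, He j, inner_smul_left, Complex.conj_ofReal, ha]
    rw [this, ← inner_conj_symm ψ (e j), ha]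
    ring
  have hNsum : N = ∑ j, Complex.normSq (a j) := by
    rw [hN, hψψ]
    rw [Complex.re_sum]
    congr 1; ext j
    rw [mul_comm, Complex.mul_conj]
    simp
  have hGsum : G = ∑ j, (μ j - E₀) * Complex.normSq (a j) := by
    rw [hG, hψHψ, hNsum, Complex.re_sum, Finset.mul_sum, ← Finset.sum_sub_distrib]
    refine Finset.sum_congr rfl fun j _ => ?_
    have h1 : (starRingEnd ℂ) (a j) * a j = ((Complex.normSq (a j) : ℝ) : ℂ) := by
      rw [mul_comm, Complex.mul_conj]
    rw [h1, ← Complex.ofReal_mul, Complex.ofReal_re]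
    ring
  have hGnonneg : 0 ≤ G := by
    rw [hGsum]
    apply Finset.sum_nonneg
    intro j _
    exact mul_nonneg (by linarith [hEmin j]) (Complex.normSq_nonneg _)
  have hKnonneg : 0 ≤ K := by linarith
  -- find a good index
  have hex : ∃ i, a i ≠ 0 ∧ μ i - E₀ ≤ K / (2 * m ^ 2) := by
    by_contra hcon
    push_neg at hcon
    have hNpos : 0 < N := lt_of_lt_of_le (by positivity) hNm
    have hexi : ∃ i, a i ≠ 0 := by
      by_contra hall
      push_neg at hall
      have : N = 0 := by
        rw [hNsum]
        apply Finset.sum_eq_zero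
        intro j _; rw [hall j]; simp
      linarith
    obtain ⟨i₀, hi₀⟩ := hexi
    have hlt : (K / (2 * m ^ 2)) * N < G := by
      rw [hGsum, hNsum, Finset.mul_sum]
      apply Finset.sum_lt_sum
      · intro j _
        rcases eq_or_ne (a j) 0 with h | h
        · simp [h]
        · exact le_of_lt (by
            have := hcon j h
            have hns : 0 < Complex.normSq (a j) := Complex.normSq_pos.mpr h
            nlinarith)
      · refine ⟨i₀, Finset.mem_univ _, ?_⟩
        have := hcon i₀ hi₀
        have hns : 0 < Complex.normSq (a i₀) := Complex.normSq_pos.mpr hi₀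
        nlinarith
    have hge : K / 2 ≤ (K / (2 * m ^ 2)) * N := by
      have h1 : K / 2 = (K / (2 * m ^ 2)) * m ^ 2 := by field_simp
      rw [h1]
      apply mul_le_mul_of_nonneg_left hNm
      positivity
    linarith
  obtain ⟨i, hai, hμi⟩ := hex
  -- orthogonality of eigenvectors to Φ₀ for eigenvalues ≠ E₀
  have hbzero : ∀ j, μ j ≠ E₀ → ⟪Φ₀, e j⟫ = 0 := by
    intro j hne
    have h1 : ⟪Φ₀, H (e j)⟫ = ((μ j : ℝ) : ℂ) * ⟪Φ₀, e j⟫ := by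
      rw [He j, inner_smul_right]
    have h2 : ⟪Φ₀, H (e j)⟫ = ((E₀ : ℝ) : ℂ) * ⟪Φ₀, e j⟫ := by
      rw [← hsymH, hE₀, inner_smul_left, Complex.conj_ofReal]
    have h3 : (((μ j : ℝ) : ℂ) - ((E₀ : ℝ) : ℂ)) * ⟪Φ₀, e j⟫ = 0 := by
      rw [sub_mul, ← h1, ← h2, sub_self]
    rcases mul_eq_zero.mp h3 with h | h
    · exfalso
      apply hne
      have := sub_eq_zero.mp h
      exact_mod_cast this
    · exact h
  -- the eigenvector
  set s : Finset (Fin n) := Finset.univ.filter (fun j => μ j = μ i) with hs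
  set v : EuclideanSpace ℂ (Fin n) := ∑ j ∈ s, a j • e j with hv
  have his : i ∈ s := by rw [hs]; simp
  have hvin : ⟪e i, v⟫ = a i := by
    rw [hv, inner_sum, Finset.sum_eq_single i]
    · rw [inner_smul_right, inner_self_eq_norm_sq_to_K, e.orthonormal.1 i]
      norm_num
    · intro j _ hji
      rw [inner_smul_right, e.orthonormal.2 (Ne.symm hji), mul_zero]
    · intro hnotin
      exact absurd his hnotin
  have hvne : v ≠ 0 := by
    intro h
    rw [h, inner_zero_right] at hvin
    exact hai hvin.symm
  have hvEig : H v = ((μ i : ℝ) : ℂ) • v := by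
    rw [hv, map_sum, Finset.smul_sum]
    apply Finset.sum_congr rfl
    intro j hj
    have hμj : μ j = μ i := by
      rw [hs] at hj
      exact (Finset.mem_filter.mp hj).2
    rw [map_smul, He j, hμj, smul_comm]
  have hvorth : ⟪Φ₀, v⟫ = 0 := by
    rw [hv, inner_sum]
    simp_rw [inner_smul_right]
    rcases eq_or_ne (μ i) E₀ with hE | hE
    · have hfull : ∑ j ∈ s, a j * ⟪Φ₀, e j⟫ = ∑ j, a j * ⟪Φ₀, e j⟫ := by
        apply Finset.sum_subset (Finset.subset_univ s)
        intro j _ hjns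
        have : μ j ≠ μ i := by
          intro h
          exact hjns (by rw [hs]; simp [h])
        rw [hbzero j (by rw [hE] at this; exact this)]
        ring
      have hall : ∑ j, a j * ⟪Φ₀, e j⟫ = ⟪Φ₀, ψ⟫ := by
        rw [hψsum Φ₀]
        apply Finset.sum_congr rfl
        intro j _
        ring
      calc ∑ j ∈ s, a j * ⟪Φ₀, e j⟫ = ∑ j, a j * ⟪Φ₀, e j⟫ := hfull
        _ = ⟪Φ₀, ψ⟫ := hall
        _ = 0 := hO1
    · apply Finset.sum_eq_zero
      intro j hj
      have hμj : μ j = μ i := by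
        rw [hs] at hj
        exact (Finset.mem_filter.mp hj).2
      rw [hbzero j (by rw [hμj]; exact hE)]
      ring
  exact ⟨μ i, v, hvne, hvEig, hvorth, by linarith⟩
end
end

section
/- Let O be a self-adjoint operator on a finite-dimensional Hilbert space with ‖O‖ ≤ R, and Φ a unit vector with ⟨Φ, O²Φ⟩ ≥ μ² > 0. Define b_m = 2^{2m}(m!)²/(2m)! · ⟨Φ, O^{2m}Φ⟩. Then for every m ≥ 1: 1/(2R²) ≤ b_{m-1}/b_m ≤ 1/μ². -/
/-! Write `aₘ = ⟨Φ, O²ᵐ Φ⟩ = ‖Oᵐ Φ‖²`. Cauchy–Schwarz applied to `⟨Oᵐ Φ, Oᵐ⁺² Φ⟩` makes `a`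
log-convex, so the ratios `aₘ₊₁ / aₘ` are nondecreasing and hence at least `a₁ / a₀ ≥ μ²`;
`‖O‖ ≤ R` bounds them above by `R²`. The prefactor of `bₘ` is `4ᵐ / binom(2m, m)`, whose
consecutive ratios `(2m + 2) / (2m + 1)` lie in `[1, 2]`. -/

open scoped Nat

theorem pos_and_mul_le_succ_of_sq_le_mul {a : ℕ → ℝ} {r : ℝ} (hr : 0 < r) (h₀ : 0 < a 0)
    (h₁ : r * a 0 ≤ a 1) (hconv : ∀ m, a (m + 1) ^ 2 ≤ a m * a (m + 2)) :
    ∀ m, 0 < a m ∧ r * a m ≤ a (m + 1)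
  | 0 => ⟨h₀, h₁⟩
  | m + 1 => by
    obtain ⟨hpos, hle⟩ := pos_and_mul_le_succ_of_sq_le_mul hr h₀ h₁ hconv m
    have hpos' : 0 < a (m + 1) := lt_of_lt_of_le (by positivity) hle
    have hmul : r * a (m + 1) * a m ≤ a (m + 2) * a m := by nlinarith [hconv m]
    exact ⟨hpos', le_of_mul_le_mul_right hmul hpos⟩

theorem one_div_le_div_and_div_le_one_div {x y s t : ℝ} (hx : 0 < x) (ht : 0 < t)
    (hty : t * x ≤ y) (hys : y ≤ s * x) : 1 / s ≤ x / y ∧ x / y ≤ 1 / t := by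
  have hy : 0 < y := (mul_pos ht hx).trans_le hty
  have hs : 0 < s := pos_of_mul_pos_left (hy.trans_le hys) hx.le
  constructor
  · rw [div_le_div_iff₀ hs hy]
    linarith
  · rw [div_le_div_iff₀ hy ht]
    linarith

theorem ContinuousLinearMap.norm_pow_succ_apply_le {𝕜 E : Type*} [RCLike 𝕜]
    [NormedAddCommGroup E] [NormedSpace 𝕜 E] (T : E →L[𝕜] E) (x : E) (m : ℕ) :
    ‖(T ^ (m + 1)) x‖ ≤ ‖T‖ * ‖(T ^ m) x‖ := by
  rw [pow_succ', mul_apply_eq_comp]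
  exact T.le_opNorm _

namespace IsSelfAdjoint

variable {𝕜 E : Type*} [RCLike 𝕜] [NormedAddCommGroup E] [InnerProductSpace 𝕜 E]
  [CompleteSpace E] {T : E →L[𝕜] E}

theorem inner_pow_add_apply (hT : IsSelfAdjoint T) (x : E) (j k : ℕ) :
    inner 𝕜 x ((T ^ (j + k)) x) = inner 𝕜 ((T ^ j) x) ((T ^ k) x) := by
  rw [pow_add, mul_apply_eq_comp]
  exact ((hT.pow j).isSymmetric x ((T ^ k) x)).symm

theorem re_inner_pow_two_mul_apply (hT : IsSelfAdjoint T) (x : E) (m : ℕ) :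
    RCLike.re (inner 𝕜 x ((T ^ (2 * m)) x)) = ‖(T ^ m) x‖ ^ 2 := by
  rw [two_mul, hT.inner_pow_add_apply, inner_self_eq_norm_sq]

theorem sq_norm_pow_succ_apply_sq_le (hT : IsSelfAdjoint T) (x : E) (m : ℕ) :
    (‖(T ^ (m + 1)) x‖ ^ 2) ^ 2 ≤ ‖(T ^ m) x‖ ^ 2 * ‖(T ^ (m + 2)) x‖ ^ 2 := by
  have hCS : ‖(T ^ (m + 1)) x‖ ^ 2 ≤ ‖(T ^ m) x‖ * ‖(T ^ (m + 2)) x‖ :=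
    calc ‖(T ^ (m + 1)) x‖ ^ 2 = RCLike.re (inner 𝕜 ((T ^ m) x) ((T ^ (m + 2)) x)) := by
          rw [← hT.inner_pow_add_apply, ← hT.re_inner_pow_two_mul_apply]; ring_nf
      _ ≤ ‖(T ^ m) x‖ * ‖(T ^ (m + 2)) x‖ := re_inner_le_norm _ _
  calc (‖(T ^ (m + 1)) x‖ ^ 2) ^ 2 ≤ (‖(T ^ m) x‖ * ‖(T ^ (m + 2)) x‖) ^ 2 := by gcongr
    _ = _ := mul_pow _ _ 2

theorem pos_and_mul_le_sq_norm_pow_succ_apply (hT : IsSelfAdjoint T) {x : E} (hx : x ≠ 0)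
    {r : ℝ} (hr : 0 < r) (h : r * ‖x‖ ^ 2 ≤ ‖T x‖ ^ 2) (m : ℕ) :
    0 < ‖(T ^ m) x‖ ^ 2 ∧ r * ‖(T ^ m) x‖ ^ 2 ≤ ‖(T ^ (m + 1)) x‖ ^ 2 :=
  pos_and_mul_le_succ_of_sq_le_mul (a := fun j => ‖(T ^ j) x‖ ^ 2) hr
    (by simpa using pow_pos (norm_pos_iff.mpr hx) 2) (by simpa using h)
    (hT.sq_norm_pow_succ_apply_sq_le x) m

end IsSelfAdjoint

theorem two_pow_two_mul_mul_factorial_sq_div_factorial (m : ℕ) :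
    (2 ^ (2 * m) * (m ! : ℝ) ^ 2 / (2 * m)! : ℝ) = 4 ^ m / Nat.centralBinom m := by
  have h := Nat.add_choose_mul_factorial_mul_factorial m m
  rw [← two_mul] at h
  rw [← h, Nat.centralBinom_eq_two_mul_choose, pow_mul]
  push_cast
  have hfac := m.factorial_pos
  field_simp
  norm_num

theorem four_pow_succ_div_centralBinom_succ (m : ℕ) :
    (4 : ℝ) ^ (m + 1) / Nat.centralBinom (m + 1)
      = 4 ^ m / Nat.centralBinom m * ((2 * m + 2) / (2 * m + 1)) := by
  have h : ((m + 1 : ℕ) : ℝ) * Nat.centralBinom (m + 1)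
      = (2 * (2 * m + 1) : ℕ) * Nat.centralBinom m := by
    exact_mod_cast Nat.succ_mul_centralBinom_succ m
  have h₀ := (Nat.centralBinom_pos m).ne'
  have h₁ := (Nat.centralBinom_pos (m + 1)).ne'
  push_cast at h
  field_simp
  linear_combination -(4 : ℝ) ^ m * 2 * h

theorem four_pow_div_centralBinom_le_succ (m : ℕ) :
    (4 : ℝ) ^ m / Nat.centralBinom m ≤ 4 ^ (m + 1) / Nat.centralBinom (m + 1) := by
  rw [four_pow_succ_div_centralBinom_succ]
  refine le_mul_of_one_le_right (by positivity) ?_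
  rw [one_le_div (by positivity)]
  linarith

theorem four_pow_succ_div_centralBinom_succ_le (m : ℕ) :
    (4 : ℝ) ^ (m + 1) / Nat.centralBinom (m + 1) ≤ 2 * (4 ^ m / Nat.centralBinom m) := by
  rw [four_pow_succ_div_centralBinom_succ, mul_comm (2 : ℝ) (4 ^ m / _)]
  gcongr
  rw [div_le_iff₀ (by positivity)]
  linarith [(m.cast_nonneg : (0 : ℝ) ≤ m)]

local notation "⟪" x ", " y "⟫" => @inner ℂ _ _ x y

/-- For self-adjoint `O` with `‖O‖ ≤ R` and a unit vector `Φ` with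
`⟨Φ, O² Φ⟩ ≥ μ² > 0`, setting `b_m = 2^{2m}(m!)²/(2m)! ⟨Φ, O^{2m} Φ⟩`, one has
`1/(2R²) ≤ b_{m-1}/b_m ≤ 1/μ²` for every `m ≥ 1`. -/
theorem stmt5 (n : ℕ)
    (O : EuclideanSpace ℂ (Fin n) →L[ℂ] EuclideanSpace ℂ (Fin n))
    (hO : IsSelfAdjoint O)
    (R : ℝ) (hR : ‖O‖ ≤ R)
    (Φ : EuclideanSpace ℂ (Fin n)) (hΦ : ‖Φ‖ = 1)
    (μ : ℝ) (hμ : 0 < μ) (hLRO : μ ^ 2 ≤ (⟪Φ, (O ^ 2) Φ⟫).re)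
    (b : ℕ → ℝ)
    (hb : ∀ m : ℕ, b m = (2 ^ (2 * m) * ((Nat.factorial m : ℝ)) ^ 2
      / (Nat.factorial (2 * m) : ℝ)) * (⟪Φ, (O ^ (2 * m)) Φ⟫).re) :
    ∀ m : ℕ, 1 ≤ m →
      1 / (2 * R ^ 2) ≤ b (m - 1) / b m ∧ b (m - 1) / b m ≤ 1 / μ ^ 2 := by
  intro m hm
  obtain ⟨k, rfl⟩ := Nat.exists_eq_add_of_le' hm
  set a : ℕ → ℝ := fun j => ‖(O ^ j) Φ‖ ^ 2
  set w : ℕ → ℝ := fun j => 4 ^ j / Nat.centralBinom j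
  have hre : ∀ j, (⟪Φ, (O ^ (2 * j)) Φ⟫).re = a j := hO.re_inner_pow_two_mul_apply Φ
  have hba : ∀ j, b j = w j * a j := fun j => by
    rw [hb, two_pow_two_mul_mul_factorial_sq_div_factorial, hre]
  have hw : ∀ j, 0 < w j := fun j => div_pos (by positivity) (mod_cast Nat.centralBinom_pos j)
  have hgrowth := hO.pos_and_mul_le_sq_norm_pow_succ_apply (x := Φ) (r := μ ^ 2)
    (norm_ne_zero_iff.mp (by simp [hΦ])) (by positivity)
    (by simpa [hΦ, a] using (hre 1).symm.trans_ge hLRO)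
  have hstep : a (k + 1) ≤ R ^ 2 * a k := by
    simp only [a, ← mul_pow]
    gcongr
    exact (O.norm_pow_succ_apply_le Φ k).trans (by gcongr)
  rw [Nat.add_sub_cancel]
  refine one_div_le_div_and_div_le_one_div (by rw [hba]; exact mul_pos (hw k) (hgrowth k).1)
    (by positivity) ?_ ?_
  · rw [hba, hba, mul_left_comm]
    exact mul_le_mul (four_pow_div_centralBinom_le_succ k) (hgrowth k).2 (by positivity)
      (hw _).le
  · rw [hba, hba, mul_mul_mul_comm]
    exact mul_le_mul (four_pow_succ_div_centralBinom_succ_le k) hstep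
      (hgrowth (k + 1)).1.le (by linarith [hw k])
end

section
/- Let Q be an operator on a finite-dimensional Hilbert space with ‖[Q, Q*]‖ ≤ c, and Φ a unit vector. Set a_m = ⟨Φ, (Q*)^m Q^m Φ⟩. If a_{m-2} ≠ 0 and a_{m-1} ≠ 0 for some m ≥ 2, then a_m/a_{m-1} ≥ a_{m-1}/a_{m-2} - c. -/
noncomputable section

local notation "⟪" x ", " y "⟫" => @inner ℂ _ _ x y

open ContinuousLinearMap

/-!
Write `x = Q^{m-2} Φ`, so that `a_{m-2} = ‖x‖²`, `a_{m-1} = ‖Q x‖²` and `a_m = ‖Q² x‖²`.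
Cauchy–Schwarz applied to `‖Q x‖² = ⟨x, Q* Q x⟩` gives `‖Q x‖⁴ ≤ ‖x‖² ‖Q* Q x‖²`, and
`‖Q* y‖² = ⟨y, [Q, Q*] y⟩ + ‖Q y‖² ≤ ‖Q y‖² + c ‖y‖²` for `y = Q x`. Hence
`a_{m-1}² ≤ a_{m-2} (a_m + c a_{m-1})`, which is the claim after dividing by `a_{m-2} a_{m-1}`.
-/

namespace ContinuousLinearMap

variable {𝕜 E F : Type*} [RCLike 𝕜] [NormedAddCommGroup E] [InnerProductSpace 𝕜 E]
  [CompleteSpace E] [NormedAddCommGroup F] [InnerProductSpace 𝕜 F] [CompleteSpace F]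

theorem adjoint_pow (T : E →L[𝕜] E) (j : ℕ) : adjoint (T ^ j) = adjoint T ^ j := by
  simp only [← star_eq_adjoint, star_pow]

theorem re_inner_adjoint_pow_mul_pow (T : E →L[𝕜] E) (j : ℕ) (x : E) :
    RCLike.re (inner 𝕜 x ((adjoint T ^ j * T ^ j) x)) = ‖(T ^ j) x‖ ^ 2 := by
  rw [← adjoint_pow]
  exact (apply_norm_sq_eq_inner_adjoint_right _ x).symm

theorem norm_apply_sq_le_norm_mul_norm_adjoint_apply (T : E →L[𝕜] F) (x : E) :
    ‖T x‖ ^ 2 ≤ ‖x‖ * ‖adjoint T (T x)‖ := by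
  rw [← inner_self_eq_norm_sq (𝕜 := 𝕜), ← adjoint_inner_right]
  exact re_inner_le_norm _ _

theorem norm_adjoint_apply_sq_le (T : E →L[𝕜] E) (x : E) :
    ‖adjoint T x‖ ^ 2 ≤ ‖T x‖ ^ 2 + ‖T * adjoint T - adjoint T * T‖ * ‖x‖ ^ 2 := by
  set D := T * adjoint T - adjoint T * T
  have hsplit : T (adjoint T x) = D x + adjoint T (T x) := by simp [D]
  have hD : RCLike.re (inner 𝕜 x (D x)) ≤ ‖D‖ * ‖x‖ ^ 2 :=
    calc RCLike.re (inner 𝕜 x (D x)) ≤ ‖x‖ * ‖D x‖ := re_inner_le_norm _ _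
      _ ≤ ‖x‖ * (‖D‖ * ‖x‖) := by gcongr; exact D.le_opNorm x
      _ = ‖D‖ * ‖x‖ ^ 2 := by ring
  calc ‖adjoint T x‖ ^ 2 = RCLike.re (inner 𝕜 x (T (adjoint T x))) := by
        rw [← adjoint_inner_left, inner_self_eq_norm_sq]
    _ = RCLike.re (inner 𝕜 x (D x)) + ‖T x‖ ^ 2 := by
        rw [hsplit, inner_add_right, map_add, adjoint_inner_right, inner_self_eq_norm_sq]
    _ ≤ ‖T x‖ ^ 2 + ‖D‖ * ‖x‖ ^ 2 := by linarith

theorem sq_norm_apply_sq_le_of_norm_commutator_le (T : E →L[𝕜] E) (x : E) {c : ℝ}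
    (hc : ‖T * adjoint T - adjoint T * T‖ ≤ c) :
    (‖T x‖ ^ 2) ^ 2 ≤ ‖x‖ ^ 2 * (‖T (T x)‖ ^ 2 + c * ‖T x‖ ^ 2) :=
  calc (‖T x‖ ^ 2) ^ 2 ≤ (‖x‖ * ‖adjoint T (T x)‖) ^ 2 := by
        gcongr; exact norm_apply_sq_le_norm_mul_norm_adjoint_apply T x
    _ = ‖x‖ ^ 2 * ‖adjoint T (T x)‖ ^ 2 := by ring
    _ ≤ ‖x‖ ^ 2 * (‖T (T x)‖ ^ 2 + c * ‖T x‖ ^ 2) := by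
        gcongr
        exact (norm_adjoint_apply_sq_le T (T x)).trans (by gcongr)

end ContinuousLinearMap

theorem div_sub_le_div_of_sq_le_mul {p q r c : ℝ} (hp : 0 < p) (hq : 0 < q)
    (h : q ^ 2 ≤ p * (r + c * q)) : q / p - c ≤ r / q := by
  rw [div_sub' hp.ne', div_le_div_iff₀ hp hq]
  nlinarith

theorem stmt6_general (n : ℕ)
    (Q : EuclideanSpace ℂ (Fin n) →L[ℂ] EuclideanSpace ℂ (Fin n))
    (c : ℝ) (hc : ‖Q * adjoint Q - adjoint Q * Q‖ ≤ c)
    (Φ : EuclideanSpace ℂ (Fin n))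
    (a : ℕ → ℝ) (ha : ∀ m : ℕ, a m = (⟪Φ, ((adjoint Q) ^ m * Q ^ m) Φ⟫).re)
    (m : ℕ) (hm : 2 ≤ m) (h2 : a (m - 2) ≠ 0) (h1 : a (m - 1) ≠ 0) :
    a (m - 1) / a (m - 2) - c ≤ a m / a (m - 1) := by
  obtain ⟨k, rfl⟩ : ∃ k, m = k + 2 := ⟨m - 2, by omega⟩
  simp only [Nat.add_sub_cancel, Nat.add_succ_sub_one] at h2 h1 ⊢
  have ha_norm : ∀ j, a j = ‖(Q ^ j) Φ‖ ^ 2 := fun j =>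
    (ha j).trans (re_inner_adjoint_pow_mul_pow Q j Φ)
  have hsucc : ∀ j, (Q ^ (j + 1)) Φ = Q ((Q ^ j) Φ) := fun j => by rw [pow_succ']; rfl
  simp only [ha_norm, hsucc] at h1 h2 ⊢
  exact div_sub_le_div_of_sq_le_mul ((sq_nonneg _).lt_of_ne' h2) ((sq_nonneg _).lt_of_ne' h1)
    (sq_norm_apply_sq_le_of_norm_commutator_le Q _ hc)

/-- For an operator `Q` with `‖[Q,Q*]‖ ≤ c`, a unit vector `Φ`, and
`a_m = ⟨Φ, (Q*)^m Q^m Φ⟩`, if `a_{m-2} ≠ 0` and `a_{m-1} ≠ 0` for some `m ≥ 2`,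
then `a_m/a_{m-1} ≥ a_{m-1}/a_{m-2} - c`. -/
theorem stmt6 (n : ℕ)
    (Q : EuclideanSpace ℂ (Fin n) →L[ℂ] EuclideanSpace ℂ (Fin n))
    (c : ℝ) (hc : ‖Q * adjoint Q - adjoint Q * Q‖ ≤ c)
    (Φ : EuclideanSpace ℂ (Fin n)) (hΦ : ‖Φ‖ = 1)
    (a : ℕ → ℝ) (ha : ∀ m : ℕ, a m = (⟪Φ, ((adjoint Q) ^ m * Q ^ m) Φ⟫).re)
    (m : ℕ) (hm : 2 ≤ m) (h2 : a (m - 2) ≠ 0) (h1 : a (m - 1) ≠ 0) :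
    a (m - 1) / a (m - 2) - c ≤ a m / a (m - 1) :=
  stmt6_general n Q c hc Φ a ha m hm h2 h1
end
end

section
/- Let Φ be a unit vector in ⊗_{x∈Λ} ℋ_x defining translation-invariant expectation values on a finite translation-invariant system Λ = (ℤ/Lℤ)^d: ⟨Φ, τ_x(A) Φ⟩ = ⟨Φ, A Φ⟩ for all operators A and translations τ_x. Then for any operator B and any subset Ω ⊆ Λ, (1/|Ω|²) ⟨Φ, B_Ω* B_Ω Φ⟩ ≥ (1/N²) ⟨Φ, B_Λ* B_Λ Φ⟩, where B_Ω = Σ_{x∈Ω} τ_x(B) and N = |Λ|. -/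
noncomputable section

local notation "⟪" x ", " y "⟫" => @inner ℂ _ _ x y

open ContinuousLinearMap

set_option maxHeartbeats 1000000 in
/-- On the finite translation-invariant lattice `Λ = (ℤ/Lℤ)^d` with `N = L^d`
sites, whose translations act on the (finite-dimensional) Hilbert space by unitaries
`U x`, with `τ_x(A) = U x * A * (U x)*`, let `Φ` be a unit vector with translation-invariant
expectation values.  Then for any operator `B` and any (nonempty) `Ω ⊆ Λ`,
`(1/|Ω|²)⟨Φ, B_Ω* B_Ω Φ⟩ ≥ (1/N²)⟨Φ, B_Λ* B_Λ Φ⟩` where `B_Ω = Σ_{x∈Ω} τ_x(B)`. -/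
theorem stmt16 (L d : ℕ) [NeZero L]
    (V : Type*) [NormedAddCommGroup V] [InnerProductSpace ℂ V] [FiniteDimensional ℂ V]
    (U : (Fin d → ZMod L) → (V →L[ℂ] V))
    (hU0 : U 0 = 1)
    (hUadd : ∀ x y : Fin d → ZMod L, U (x + y) = U x * U y)
    (hUunit : ∀ x : Fin d → ZMod L, (adjoint (U x)) * U x = 1 ∧ U x * adjoint (U x) = 1)
    (Φ : V) (hΦ : ‖Φ‖ = 1)
    (hinv : ∀ (x : Fin d → ZMod L) (A : V →L[ℂ] V),
      ⟪Φ, (U x * A * adjoint (U x)) Φ⟫ = ⟪Φ, A Φ⟫)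
    (B : V →L[ℂ] V)
    (Ω : Finset (Fin d → ZMod L)) (hΩ : Ω.Nonempty)
    (BΩ BΛ : V →L[ℂ] V)
    (hBΩ : BΩ = ∑ x ∈ Ω, U x * B * adjoint (U x))
    (hBΛ : BΛ = ∑ x ∈ (Finset.univ : Finset (Fin d → ZMod L)), U x * B * adjoint (U x)) :
    (1 / ((Ω.card : ℝ)) ^ 2) * (⟪Φ, ((adjoint BΩ) * BΩ) Φ⟫).re
      ≥ (1 / ((Fintype.card (Fin d → ZMod L) : ℝ)) ^ 2)
          * (⟪Φ, ((adjoint BΛ) * BΛ) Φ⟫).re := by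
  classical
  have hadjmul : ∀ A C : V →L[ℂ] V, adjoint (A * C) = adjoint C * adjoint A :=
    fun A C => adjoint_comp A C
  -- expectation of A†A is ‖A Φ‖²
  have hnorm : ∀ A : V →L[ℂ] V, (⟪Φ, (adjoint A * A) Φ⟫).re = ‖A Φ‖ ^ 2 := by
    intro A
    rw [ContinuousLinearMap.mul_apply, adjoint_inner_right]
    simpa using inner_self_eq_norm_sq (𝕜 := ℂ) (A Φ)
  -- translated operators have the same norm on Φ
  have hτnorm : ∀ (z : Fin d → ZMod L) (A : V →L[ℂ] V),
      ‖(U z * A * adjoint (U z)) Φ‖ = ‖A Φ‖ := by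
    intro z A
    have hadj : adjoint (U z * A * adjoint (U z)) * (U z * A * adjoint (U z))
        = U z * (adjoint A * A) * adjoint (U z) := by
      have h1 := (hUunit z).1
      rw [hadjmul, hadjmul, adjoint_adjoint]
      calc U z * (adjoint A * adjoint (U z)) * (U z * A * adjoint (U z))
          = U z * (adjoint A * ((adjoint (U z) * U z) * A)) * adjoint (U z) := by
            simp only [mul_assoc]
        _ = U z * (adjoint A * A) * adjoint (U z) := by rw [h1, one_mul]
    have h0 := hnorm (U z * A * adjoint (U z))
    rw [hadj, hinv, hnorm A] at h0
    have h1 : (0:ℝ) ≤ ‖(U z * A * adjoint (U z)) Φ‖ := norm_nonneg _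
    have h2 : (0:ℝ) ≤ ‖A Φ‖ := norm_nonneg _
    nlinarith [h0]
  -- averaging B_Ω over all translations gives |Ω| • B_Λ
  have hsum : ∑ z : Fin d → ZMod L, U z * BΩ * adjoint (U z) = (Ω.card : ℂ) • BΛ := by
    have hstep : ∀ (z x : Fin d → ZMod L),
        U z * (U x * B * adjoint (U x)) * adjoint (U z)
        = U (z + x) * B * adjoint (U (z + x)) := by
      intro z x
      rw [hUadd, hadjmul]
      simp only [mul_assoc]
    calc ∑ z : Fin d → ZMod L, U z * BΩ * adjoint (U z)
        = ∑ z : Fin d → ZMod L, ∑ x ∈ Ω, U (z + x) * B * adjoint (U (z + x)) := by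
          refine Finset.sum_congr rfl fun z _ => ?_
          rw [hBΩ, Finset.mul_sum, Finset.sum_mul]
          exact Finset.sum_congr rfl fun x _ => hstep z x
      _ = ∑ x ∈ Ω, ∑ z : Fin d → ZMod L, U (z + x) * B * adjoint (U (z + x)) :=
          Finset.sum_comm
      _ = ∑ _x ∈ Ω, BΛ := by
          refine Finset.sum_congr rfl fun x _ => ?_
          rw [hBΛ]
          exact Fintype.sum_equiv (Equiv.addRight x) _ _ (fun z => rfl)
      _ = (Ω.card : ℂ) • BΛ := by
          rw [Finset.sum_const]
          exact (Nat.cast_smul_eq_nsmul ℂ _ _).symm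
  -- key norm inequality
  have hkey : (Ω.card : ℝ) * ‖BΛ Φ‖ ≤ (Fintype.card (Fin d → ZMod L) : ℝ) * ‖BΩ Φ‖ := by
    have h1 : ‖(∑ z : Fin d → ZMod L, U z * BΩ * adjoint (U z)) Φ‖
        ≤ ∑ z : Fin d → ZMod L, ‖(U z * BΩ * adjoint (U z)) Φ‖ := by
      rw [ContinuousLinearMap.sum_apply]
      exact norm_sum_le _ _
    rw [hsum] at h1
    simp only [hτnorm, ContinuousLinearMap.smul_apply, norm_smul,
      Finset.sum_const, Finset.card_univ, nsmul_eq_mul] at h1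
    simpa using h1
  have hΩpos : (0:ℝ) < (Ω.card : ℝ) := by exact_mod_cast Finset.card_pos.mpr hΩ
  have hNpos : (0:ℝ) < (Fintype.card (Fin d → ZMod L) : ℝ) := by
    exact_mod_cast Fintype.card_pos
  rw [ge_iff_le, hnorm, hnorm]
  rw [div_mul_eq_mul_div, div_mul_eq_mul_div,
    div_le_div_iff₀ (by positivity) (by positivity)]
  have hsq := mul_self_le_mul_self (by positivity) hkey
  nlinarith [hsq]
end
end

section
/- Let C be self-adjoint and O⁺ an operator on a finite-dimensional Hilbert space with [O⁺, C] = -O⁺, O⁻ = (O⁺)*. Let Φ be a unit eigenvector of C, and suppose (O⁺)^M Φ ≠ 0 and (O⁻)^M Φ ≠ 0 for 1 ≤ M ≤ k. Define Ψ^{(M)} = (O⁺)^M Φ/‖(O⁺)^M Φ‖ for M > 0, Ψ^{(M)} = (O⁻)^{|M|} Φ/‖(O⁻)^{|M|} Φ‖ for M < 0, and Ξ = (Φ + Σ_{M=1}^{k} (Ψ^{(M)} + Ψ^{(-M)}))/√(2k+1). Then Ξ is a unit vector and ⟨Ξ, O⁽²⁾ Ξ⟩ = 0, where O⁽²⁾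 = (O⁺ - O⁻)/(2i). -/
noncomputable section

local notation "⟪" x ", " y "⟫" => @inner ℂ _ _ x y

open ContinuousLinearMap

set_option maxRecDepth 8000 in
set_option maxHeartbeats 1000000 in
/-- Let `C` be self-adjoint and `O⁺` an operator with `[O⁺,C] = -O⁺`,
`O⁻ = (O⁺)*`, and `Φ` a unit eigenvector of `C` with `(O⁺)^M Φ ≠ 0` and `(O⁻)^M Φ ≠ 0` for
`1 ≤ M ≤ k`.  With `Ψ^{(M)}` the normalized raised/lowered states and
`Ξ = (Φ + Σ_{M=1}^k (Ψ^{(M)} + Ψ^{(-M)}))/√(2k+1)`, the vector `Ξ` is a unit vector and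
`⟨Ξ, O⁽²⁾ Ξ⟩ = 0`, where `O⁽²⁾ = (O⁺-O⁻)/(2i)`. -/
theorem stmt19 (n : ℕ)
    (C Op : EuclideanSpace ℂ (Fin n) →L[ℂ] EuclideanSpace ℂ (Fin n))
    (hC : IsSelfAdjoint C)
    (hcomm : Op * C - C * Op = -Op)
    (Om : EuclideanSpace ℂ (Fin n) →L[ℂ] EuclideanSpace ℂ (Fin n))
    (hOm : Om = adjoint Op)
    (Φ : EuclideanSpace ℂ (Fin n)) (hΦ : ‖Φ‖ = 1)
    (cval : ℝ) (heig : C Φ = (cval : ℂ) • Φ)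
    (k : ℕ) (hk : 0 < k)
    (hnep : ∀ M : ℕ, 1 ≤ M → M ≤ k → (Op ^ M) Φ ≠ 0)
    (hnem : ∀ M : ℕ, 1 ≤ M → M ≤ k → (Om ^ M) Φ ≠ 0)
    (Ψ : ℤ → EuclideanSpace ℂ (Fin n))
    (hΨp : ∀ M : ℤ, 0 < M →
      Ψ M = (‖(Op ^ M.toNat) Φ‖ : ℂ)⁻¹ • (Op ^ M.toNat) Φ)
    (hΨn : ∀ M : ℤ, M < 0 →
      Ψ M = (‖(Om ^ (-M).toNat) Φ‖ : ℂ)⁻¹ • (Om ^ (-M).toNat) Φ)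
    (Ξ : EuclideanSpace ℂ (Fin n))
    (hΞ : Ξ = ((Real.sqrt (2 * (k : ℝ) + 1) : ℂ))⁻¹
      • (Φ + ∑ M ∈ Finset.Icc (1 : ℤ) (k : ℤ), (Ψ M + Ψ (-M))))
    (O₂ : EuclideanSpace ℂ (Fin n) →L[ℂ] EuclideanSpace ℂ (Fin n))
    (hO₂ : O₂ = (2 * Complex.I)⁻¹ • (Op - Om)) :
    ‖Ξ‖ = 1 ∧ ⟪Ξ, O₂ Ξ⟫ = 0 := by
  classical
  have hstar : star Op = Om := by rw [hOm, ContinuousLinearMap.star_eq_adjoint]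
  have hCOp : C * Op = Op * C + Op := by
    have h := congrArg Neg.neg hcomm
    simp only [neg_sub, neg_neg] at h
    rw [sub_eq_iff_eq_add] at h
    exact h.trans (add_comm _ _)
  have hCOm : C * Om = Om * C - Om := by
    have h : adjoint (Op * C - C * Op) = adjoint (-Op) := by rw [hcomm]
    rw [map_sub, map_neg, mul_def, mul_def, adjoint_comp, adjoint_comp,
      ← mul_def, ← mul_def, ← hOm, hC.adjoint_eq] at h
    rw [sub_eq_iff_eq_add] at h
    rw [h]; abel
  -- eigenvector lemmas
  have heigp : ∀ M : ℕ, C ((Op ^ M) Φ) = ((cval : ℂ) + M) • (Op ^ M) Φ := by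
    intro M
    induction M with
    | zero => simpa using heig
    | succ M ih =>
      have hp : (Op ^ (M + 1)) Φ = Op ((Op ^ M) Φ) := by rw [pow_succ']; rfl
      rw [hp]
      have h2 : C (Op ((Op ^ M) Φ)) = (Op * C + Op) ((Op ^ M) Φ) := by rw [← hCOp]; rfl
      rw [h2]
      simp only [ContinuousLinearMap.add_apply, ContinuousLinearMap.mul_apply, ih, map_smul]
      push_cast
      module
  have heigm : ∀ M : ℕ, C ((Om ^ M) Φ) = ((cval : ℂ) - M) • (Om ^ M) Φ := by
    intro M
    induction M with
    | zero => simpa using heig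
    | succ M ih =>
      have hp : (Om ^ (M + 1)) Φ = Om ((Om ^ M) Φ) := by rw [pow_succ']; rfl
      rw [hp]
      have h2 : C (Om ((Om ^ M) Φ)) = (Om * C - Om) ((Om ^ M) Φ) := by rw [← hCOm]; rfl
      rw [h2]
      simp only [ContinuousLinearMap.sub_apply, ContinuousLinearMap.mul_apply, ih, map_smul]
      push_cast
      module
  -- orthogonality of eigenvectors with distinct real eigenvalues
  have horth : ∀ (a b : ℝ) (v w : EuclideanSpace ℂ (Fin n)),
      C v = (a : ℂ) • v → C w = (b : ℂ) • w → a ≠ b → ⟪v, w⟫ = 0 := by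
    intro a b v w hv hw hab
    have hsym : ⟪C v, w⟫ = ⟪v, C w⟫ := by
      conv_lhs => rw [← hC.adjoint_eq]
      rw [ContinuousLinearMap.adjoint_inner_left]
    rw [hv, hw, inner_smul_left, inner_smul_right, Complex.conj_ofReal] at hsym
    by_contra h
    exact hab (by exact_mod_cast mul_right_cancel₀ h hsym)
  -- unnormalized family
  set u : ℤ → EuclideanSpace ℂ (Fin n) :=
    fun m => if 0 ≤ m then (Op ^ m.toNat) Φ else (Om ^ (-m).toNat) Φ with hu
  set f : ℤ → EuclideanSpace ℂ (Fin n) := fun m => (‖u m‖ : ℂ)⁻¹ • u m with hf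
  have heigu : ∀ m : ℤ, C (u m) = ((cval : ℂ) + (m : ℂ)) • u m := by
    intro m
    by_cases hm : 0 ≤ m
    · simp only [hu, if_pos hm, heigp]
      congr 2
      exact_mod_cast congrArg (Int.cast : ℤ → ℂ) (Int.toNat_of_nonneg hm)
    · simp only [hu, if_neg hm, heigm]
      congr 1
      have h1 : (((-m).toNat : ℤ) : ℂ) = ((-m : ℤ) : ℂ) :=
        congrArg (Int.cast : ℤ → ℂ) (Int.toNat_of_nonneg (by omega))
      push_cast at h1 ⊢
      rw [h1]; ring
  have heigf : ∀ m : ℤ, C (f m) = ((cval : ℂ) + (m : ℂ)) • f m := by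
    intro m
    simp only [hf]
    rw [map_smul, heigu m, smul_comm]
  have hune : ∀ m : ℤ, -(k : ℤ) ≤ m → m ≤ k → u m ≠ 0 := by
    intro m h1 h2
    by_cases hm : 0 ≤ m
    · simp only [hu, if_pos hm]
      rcases Nat.eq_zero_or_pos m.toNat with h | h
      · rw [h, pow_zero]
        simp only [ContinuousLinearMap.one_apply]
        intro h0
        rw [h0, norm_zero] at hΦ
        norm_num at hΦ
      · exact hnep m.toNat h (by omega)
    · simp only [hu, if_neg hm]
      exact hnem (-m).toNat (by omega) (by omega)
  have hfnorm : ∀ m : ℤ, -(k : ℤ) ≤ m → m ≤ k → ‖f m‖ = 1 := by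
    intro m h1 h2
    have hne := hune m h1 h2
    simp only [hf, norm_smul, norm_inv, Complex.norm_real, Real.norm_eq_abs,
      abs_of_nonneg (norm_nonneg _)]
    exact inv_mul_cancel₀ (norm_ne_zero_iff.mpr hne)
  have hfinner : ∀ a ∈ Finset.Icc (-(k : ℤ)) k, ∀ b ∈ Finset.Icc (-(k : ℤ)) k,
      ⟪f a, f b⟫ = if a = b then 1 else 0 := by
    intro a ha b hb
    simp only [Finset.mem_Icc] at ha hb
    by_cases hab : a = b
    · subst hab
      rw [if_pos rfl, inner_self_eq_norm_sq_to_K, hfnorm a ha.1 ha.2]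
      norm_num
    · rw [if_neg hab]
      refine horth (cval + a) (cval + b) _ _ ?_ ?_ ?_
      · rw [heigf a]; push_cast; ring_nf
      · rw [heigf b]; push_cast; ring_nf
      · intro h; apply hab
        have : (a : ℝ) = b := by linarith
        exact_mod_cast this
  -- Ψ agrees with f
  have hΨf : ∀ m : ℤ, m ≠ 0 → Ψ m = f m := by
    intro m hm
    rcases lt_or_gt_of_ne hm with h | h
    · rw [hΨn m h]
      simp only [hf, hu, if_neg (by omega : ¬ (0:ℤ) ≤ m)]
    · rw [hΨp m h]
      simp only [hf, hu, if_pos (by omega : (0:ℤ) ≤ m)]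
  have hf0 : f 0 = Φ := by
    simp only [hf, hu]
    norm_num [hΦ]
  -- single sum form
  have hsetsplit : Finset.Icc (-(k : ℤ)) k =
      insert 0 (Finset.Icc 1 (k : ℤ) ∪ Finset.Icc (-(k : ℤ)) (-1)) := by
    ext x
    simp only [Finset.mem_insert, Finset.mem_union, Finset.mem_Icc]
    omega
  have hnegsum : ∑ m ∈ Finset.Icc (-(k : ℤ)) (-1), f m
      = ∑ M ∈ Finset.Icc (1 : ℤ) k, f (-M) := by
    apply Finset.sum_nbij' (fun m => -m) (fun m => -m) <;>
      simp only [Finset.mem_Icc] <;> intros <;> first | omega | simp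
  have hS : Φ + ∑ M ∈ Finset.Icc (1 : ℤ) (k : ℤ), (Ψ M + Ψ (-M))
      = ∑ m ∈ Finset.Icc (-(k : ℤ)) k, f m := by
    rw [hsetsplit, Finset.sum_insert (by simp only [Finset.mem_union, Finset.mem_Icc]; omega),
      Finset.sum_union (by
        rw [Finset.disjoint_left]
        intro x hx hx'
        simp only [Finset.mem_Icc] at hx hx'
        omega), hf0, hnegsum, ← Finset.sum_add_distrib]
    congr 1
    apply Finset.sum_congr rfl
    intro M hM
    simp only [Finset.mem_Icc] at hM
    rw [hΨf M (by omega), hΨf (-M) (by omega)]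
  set S : EuclideanSpace ℂ (Fin n) := ∑ m ∈ Finset.Icc (-(k : ℤ)) k, f m with hSdef
  have hcard : (Finset.Icc (-(k : ℤ)) k).card = 2 * k + 1 := by
    rw [Int.card_Icc]; omega
  have hSinner : ⟪S, S⟫ = (2 * (k : ℂ) + 1) := by
    rw [hSdef, sum_inner]
    have hrow : ∀ a ∈ Finset.Icc (-(k : ℤ)) k, ⟪f a, S⟫ = (1 : ℂ) := by
      intro a ha
      rw [hSdef, inner_sum, Finset.sum_congr rfl (fun b hb => hfinner a ha b hb),
        Finset.sum_ite_eq, if_pos ha]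
    rw [Finset.sum_congr rfl hrow, Finset.sum_const, hcard]
    push_cast; ring
  have hSnorm : ‖S‖ = Real.sqrt (2 * (k : ℝ) + 1) := by
    have h1 : (‖S‖ : ℝ) ^ 2 = 2 * (k : ℝ) + 1 := by
      have h2 := InnerProductSpace.norm_sq_eq_re_inner (𝕜 := ℂ) S
      rw [hSinner] at h2
      rw [h2]; simp
    rw [← h1, Real.sqrt_sq (norm_nonneg _)]
  have hsq : Real.sqrt (2 * (k : ℝ) + 1) > 0 :=
    Real.sqrt_pos.mpr (by positivity)
  have hΞnorm : ‖Ξ‖ = 1 := by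
    rw [hΞ, hS, norm_smul, hSnorm]
    simp only [norm_inv, Complex.norm_real, Real.norm_eq_abs, abs_of_pos hsq]
    field_simp
  refine ⟨hΞnorm, ?_⟩
  -- second part
  have hOpuf : ∀ b : ℤ, C (Op (f b)) = ((cval : ℂ) + (b : ℂ) + 1) • Op (f b) := by
    intro b
    have h2 : C (Op (f b)) = (Op * C + Op) (f b) := by rw [← hCOp]; rfl
    rw [h2]
    simp only [ContinuousLinearMap.add_apply, ContinuousLinearMap.mul_apply, heigf b, map_smul]
    module
  have hterm : ∀ a ∈ Finset.Icc (-(k : ℤ)) k, ∀ b ∈ Finset.Icc (-(k : ℤ)) k,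
      (starRingEnd ℂ) ⟪f a, Op (f b)⟫ = ⟪f a, Op (f b)⟫ := by
    intro a ha b hb
    simp only [Finset.mem_Icc] at ha hb
    by_cases hab : a = b + 1
    · subst hab
      -- the inner product is of the form ⟪w, w⟫ up to real scalars
      have hval : ∃ w : EuclideanSpace ℂ (Fin n), ⟪u (b + 1), Op (u b)⟫ = ⟪w, w⟫ := by
        by_cases hb0 : 0 ≤ b
        · have hOpu : Op (u b) = u (b + 1) := by
            simp only [hu, if_pos hb0, if_pos (by omega : (0:ℤ) ≤ b + 1)]
            have ht : (b + 1).toNat = b.toNat + 1 := by omega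
            rw [ht, pow_succ']; rfl
          rw [hOpu]
          exact ⟨u (b + 1), rfl⟩
        · have hOmu : Om (u (b + 1)) = u b := by
            by_cases hb1 : b = -1
            · subst hb1
              simp only [hu]
              norm_num
            · have : b + 1 < 0 := by omega
              simp only [hu, if_neg (by omega : ¬ (0:ℤ) ≤ b + 1),
                if_neg (by omega : ¬ (0:ℤ) ≤ b)]
              have ht : (-b).toNat = (-(b + 1)).toNat + 1 := by omega
              rw [ht, pow_succ']; rfl
          have h' : ⟪u (b + 1), Op (u b)⟫ = ⟪Om (u (b + 1)), u b⟫ := by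
            rw [hOm, ContinuousLinearMap.adjoint_inner_left]
          rw [h', hOmu]
          exact ⟨u b, rfl⟩
      obtain ⟨w, hw⟩ := hval
      have hexp : ⟪f (b + 1), Op (f b)⟫
          = (‖u (b + 1)‖ : ℂ)⁻¹ * ((‖u b‖ : ℂ)⁻¹ * ⟪w, w⟫) := by
        simp only [hf, map_smul, inner_smul_left, inner_smul_right, map_inv₀,
          Complex.conj_ofReal, hw]
        ring
      rw [hexp, map_mul, map_mul, map_inv₀, map_inv₀, Complex.conj_ofReal,
        Complex.conj_ofReal, inner_conj_symm]
    · have h0 : ⟪f a, Op (f b)⟫ = 0 := by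
        refine horth (cval + a) (cval + b + 1) _ _ ?_ ?_ ?_
        · rw [heigf a]; push_cast; ring_nf
        · rw [hOpuf b]; push_cast; ring_nf
        · intro h; apply hab
          have : (a : ℝ) = b + 1 := by linarith
          exact_mod_cast this
      rw [h0]; simp
  have hzreal : (starRingEnd ℂ) ⟪S, Op S⟫ = ⟪S, Op S⟫ := by
    rw [hSdef, map_sum, sum_inner]
    rw [map_sum]
    refine Finset.sum_congr rfl (fun a ha => ?_)
    rw [inner_sum, map_sum]
    exact Finset.sum_congr rfl (fun b hb => hterm a ha b hb)
  have hΞreal : (starRingEnd ℂ) ⟪Ξ, Op Ξ⟫ = ⟪Ξ, Op Ξ⟫ := by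
    rw [hΞ, hS]
    simp only [map_smul, inner_smul_left, inner_smul_right, map_mul, map_inv₀,
      Complex.conj_ofReal]
    rw [hzreal]
  rw [hO₂]
  simp only [ContinuousLinearMap.smul_apply, ContinuousLinearMap.sub_apply,
    inner_smul_right, inner_sub_right]
  have h1 : ⟪Ξ, Om Ξ⟫ = ⟪Ξ, Op Ξ⟫ := by
    rw [hOm, ContinuousLinearMap.adjoint_inner_right, ← inner_conj_symm, hΞreal]
  rw [h1, sub_self, mul_zero]
end
end
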